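/- Let U be an open subset of a finite-dimensional real vector space E, g a smooth possibly degenerate metric on U, and D a Koszul derivative for g. Then the Riemann curvature tensor R(X,Y,Z,T) := g(D_X D_Y Z − D_Y D_X Z − D_{[X,Y]} Z, T) is antisymmetric in its last two arguments: R(X,Y,Z,T) = −R(X,Y,T,Z) for all smooth vector fields X, Y, Z, T. -/

import Mathlib

variable {E : Type*} [NormedAddCommGroup E] [NormedSpace ℝ E] [FiniteDimensional ℝ E]

/-- The action `(Xf)(p) = df_p(X(p))` of a vector field on a function. -/
noncomputable def vAct (X : E → E) (f : E → ℝ) : E → ℝ := fun p => fderiv ℝ f p (X p)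

/-- The Lie bracket `[X,Y](p) = dY_p(X(p)) − dX_p(Y(p))` of vector fields. -/
noncomputable def vBracket (X Y : E → E) : E → E :=
  fun p => fderiv ℝ Y p (X p) - fderiv ℝ X p (Y p)

/-- The function `p ↦ g_p(Y(p), Z(p))`. -/
noncomputable def gFun (g : E → E →L[ℝ] E →L[ℝ] ℝ) (Y Z : E → E) : E → ℝ := fun p => g p (Y p) (Z p)

/-- The Koszul form
`K(X,Y,Z) := ½{X g(Y,Z) + Y g(Z,X) − Z g(X,Y) − g(X,[Y,Z]) + g(Y,[Z,X]) + g(Z,[X,Y])}`. -/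
noncomputable def koszul (g : E → E →L[ℝ] E →L[ℝ] ℝ) (X Y Z : E → E) : E → ℝ := fun p =>
  (1/2 : ℝ) * (vAct X (gFun g Y Z) p + vAct Y (gFun g Z X) p - vAct Z (gFun g X Y) p
    - gFun g X (vBracket Y Z) p + gFun g Y (vBracket Z X) p + gFun g Z (vBracket X Y) p)

/-- The Riemann curvature tensor of a Koszul derivative `D`:
`R(X,Y,Z,T) := g(D_X D_Y Z − D_Y D_X Z − D_[X,Y] Z, T)`. -/
noncomputable def riem (g : E → E →L[ℝ] E →L[ℝ] ℝ) (D : (E → E) → (E → E) → (E → E))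
    (X Y Z T : E → E) : E → ℝ := fun p =>
  g p (D X (D Y Z) p - D Y (D X Z) p - D (vBracket X Y) Z p) (T p)

/-! Because the Koszul form satisfies `K(W,A,B) + K(W,B,A) = W g(A,B)`, a Koszul derivative is
metric: `W g(A,B) = g(D_W A, B) + g(A, D_W B)`. Applying this twice,
`R(X,Y,Z,T) + R(X,Y,T,Z) = X Y g(Z,T) − Y X g(Z,T) − [X,Y] g(Z,T)`, and the right-hand side
vanishes by the symmetry of second derivatives. -/

open scoped ContDiff Topology

section

omit [FiniteDimensional ℝ E]

variable {U : Set E} {g : E → E →L[ℝ] E →L[ℝ] ℝ} {D : (E → E) → (E → E) → (E → E)}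
  {X Y Z T V W A B : E → E} {p : E}

structure IsKoszulDerivative (U : Set E) (g : E → E →L[ℝ] E →L[ℝ] ℝ)
    (D : (E → E) → (E → E) → (E → E)) : Prop where
  contDiffOn : ∀ X Y : E → E, ContDiffOn ℝ ∞ X U → ContDiffOn ℝ ∞ Y U → ContDiffOn ℝ ∞ (D X Y) U
  koszul_eq : ∀ X Y Z : E → E, ContDiffOn ℝ ∞ X U → ContDiffOn ℝ ∞ Y U → ContDiffOn ℝ ∞ Z U →
    ∀ p ∈ U, g p (D X Y p) (Z p) = koszul g X Y Z p

lemma vBracket_swap (X Y : E → E) : vBracket Y X = -vBracket X Y := by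
  funext p
  simp [vBracket]

lemma gFun_comm (hsymm : ∀ p u v, g p u v = g p v u) (A B : E → E) : gFun g A B = gFun g B A :=
  funext fun p => hsymm p _ _

lemma ContDiffOn.gFun {n : WithTop ℕ∞} (hg : ContDiffOn ℝ n g U) (hA : ContDiffOn ℝ n A U)
    (hB : ContDiffOn ℝ n B U) : ContDiffOn ℝ n (gFun g A B) U :=
  (hg.clm_apply hA).clm_apply hB

lemma ContDiffOn.vBracket {m n : WithTop ℕ∞} (hU : IsOpen U) (hmn : m + 1 ≤ n)
    (hX : ContDiffOn ℝ n X U) (hY : ContDiffOn ℝ n Y U) : ContDiffOn ℝ m (vBracket X Y) U :=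
  ((hY.fderiv_of_isOpen hU hmn).clm_apply (hX.of_le (le_self_add.trans hmn))).sub
    ((hX.fderiv_of_isOpen hU hmn).clm_apply (hY.of_le (le_self_add.trans hmn)))

lemma vAct_vBracket {f : E → ℝ} (hf : ContDiffAt ℝ 2 f p) (hX : DifferentiableAt ℝ X p)
    (hY : DifferentiableAt ℝ Y p) :
    vAct (vBracket X Y) f p = vAct X (vAct Y f) p - vAct Y (vAct X f) p := by
  have hdf : DifferentiableAt ℝ (fderiv ℝ f) p :=
    (hf.fderiv_right (m := 1) le_rfl).differentiableAt one_ne_zero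
  have hschwarz : IsSymmSndFDerivAt ℝ f p :=
    hf.isSymmSndFDerivAt (by simp [minSmoothness_of_isRCLikeNormedField])
  have hsecond : ∀ {V W : E → E}, DifferentiableAt ℝ W p →
      vAct V (vAct W f) p
        = fderiv ℝ f p (fderiv ℝ W p (V p)) + fderiv ℝ (fderiv ℝ f) p (V p) (W p) := by
    intro V W hW
    show fderiv ℝ (fun q => fderiv ℝ f q (W q)) p (V p) = _
    rw [fderiv_clm_apply hdf hW]
    simp
  rw [hsecond hY, hsecond hX, hschwarz (X p) (Y p)]
  simp only [vAct, vBracket, map_sub]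
  ring

lemma koszul_add_koszul_swap (hsymm : ∀ p u v, g p u v = g p v u) (W A B : E → E) (p : E) :
    koszul g W A B p + koszul g W B A p = vAct W (gFun g A B) p := by
  rw [koszul, koszul, vBracket_swap A B, vBracket_swap W A, vBracket_swap B W,
    gFun_comm hsymm B A, gFun_comm hsymm A W, gFun_comm hsymm B W]
  simp only [gFun, Pi.neg_apply, map_neg]
  ring

theorem IsKoszulDerivative.vAct_gFun (hD : IsKoszulDerivative U g D)
    (hsymm : ∀ p u v, g p u v = g p v u) (hW : ContDiffOn ℝ ∞ W U) (hA : ContDiffOn ℝ ∞ A U)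
    (hB : ContDiffOn ℝ ∞ B U) (hp : p ∈ U) :
    vAct W (gFun g A B) p = g p (D W A p) (B p) + g p (A p) (D W B p) := by
  rw [hsymm p (A p), hD.koszul_eq W A B hW hA hB p hp, hD.koszul_eq W B A hW hB hA p hp,
    koszul_add_koszul_swap hsymm]

theorem IsKoszulDerivative.vAct_vAct_gFun (hD : IsKoszulDerivative U g D)
    (hsymm : ∀ p u v, g p u v = g p v u) (hU : IsOpen U) (hg : ContDiffOn ℝ ∞ g U)
    (hW : ContDiffOn ℝ ∞ W U) (hV : ContDiffOn ℝ ∞ V U) (hZ : ContDiffOn ℝ ∞ Z U)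
    (hT : ContDiffOn ℝ ∞ T U) (hp : p ∈ U) :
    vAct W (vAct V (gFun g Z T)) p = g p (D W (D V Z) p) (T p) + g p (D V Z p) (D W T p)
      + (g p (D W Z p) (D V T p) + g p (Z p) (D W (D V T) p)) := by
  have hVZ := hD.contDiffOn V Z hV hZ
  have hVT := hD.contDiffOn V T hV hT
  have hdiff : ∀ {A B : E → E}, ContDiffOn ℝ ∞ A U → ContDiffOn ℝ ∞ B U →
      DifferentiableAt ℝ (gFun g A B) p := fun hA hB =>
    ((hg.gFun hA hB).contDiffAt (hU.mem_nhds hp)).differentiableAt (by simp)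
  have hnear : vAct V (gFun g Z T) =ᶠ[𝓝 p] gFun g (D V Z) T + gFun g Z (D V T) := by
    filter_upwards [hU.mem_nhds hp] with q hq using hD.vAct_gFun hsymm hV hZ hT hq
  calc vAct W (vAct V (gFun g Z T)) p
      = vAct W (gFun g (D V Z) T + gFun g Z (D V T)) p :=
        congrArg (fun L : E →L[ℝ] ℝ => L (W p)) hnear.fderiv_eq
    _ = vAct W (gFun g (D V Z) T) p + vAct W (gFun g Z (D V T)) p := by
        simp only [vAct, fderiv_add (hdiff hVZ hT) (hdiff hZ hVT), add_apply]
    _ = _ := by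
        rw [hD.vAct_gFun hsymm hW hVZ hT hp, hD.vAct_gFun hsymm hW hZ hVT hp]

theorem IsKoszulDerivative.riem_add_riem_swap (hD : IsKoszulDerivative U g D)
    (hsymm : ∀ p u v, g p u v = g p v u) (hU : IsOpen U) (hg : ContDiffOn ℝ ∞ g U)
    (hX : ContDiffOn ℝ ∞ X U) (hY : ContDiffOn ℝ ∞ Y U) (hZ : ContDiffOn ℝ ∞ Z U)
    (hT : ContDiffOn ℝ ∞ T U) (hp : p ∈ U) :
    riem g D X Y Z T p + riem g D X Y T Z p = vAct X (vAct Y (gFun g Z T)) p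
      - vAct Y (vAct X (gFun g Z T)) p - vAct (vBracket X Y) (gFun g Z T) p := by
  have hXY := hD.vAct_vAct_gFun hsymm hU hg hX hY hZ hT hp
  have hYX := hD.vAct_vAct_gFun hsymm hU hg hY hX hZ hT hp
  have hbracket := hD.vAct_gFun hsymm (hX.vBracket hU (m := ∞) (by simp) hY) hZ hT hp
  simp only [hsymm p (Z p)] at hXY hYX hbracket
  simp only [riem, map_sub, sub_apply]
  linarith

end

/-- the Riemann curvature tensor is antisymmetric in its last two
arguments: `R(X,Y,Z,T) = −R(X,Y,T,Z)` on `U`. -/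
theorem riem_antisymm_last_pair
    (U : Set E) (hU : IsOpen U)
    (g : E → E →L[ℝ] E →L[ℝ] ℝ) (hg : ContDiffOn ℝ (⊤ : ℕ∞) g U)
    (hsymm : ∀ p : E, ∀ u v : E, g p u v = g p v u)
    (D : (E → E) → (E → E) → (E → E))
    (hDsmooth : ∀ X Y : E → E, ContDiffOn ℝ (⊤ : ℕ∞) X U → ContDiffOn ℝ (⊤ : ℕ∞) Y U →
      ContDiffOn ℝ (⊤ : ℕ∞) (D X Y) U)
    (hDK : ∀ X Y Z : E → E, ContDiffOn ℝ (⊤ : ℕ∞) X U → ContDiffOn ℝ (⊤ : ℕ∞) Y U →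
      ContDiffOn ℝ (⊤ : ℕ∞) Z U → ∀ p ∈ U, g p (D X Y p) (Z p) = koszul g X Y Z p)
    (X Y Z T : E → E) (hX : ContDiffOn ℝ (⊤ : ℕ∞) X U) (hY : ContDiffOn ℝ (⊤ : ℕ∞) Y U)
    (hZ : ContDiffOn ℝ (⊤ : ℕ∞) Z U) (hT : ContDiffOn ℝ (⊤ : ℕ∞) T U) :
    ∀ p ∈ U, riem g D X Y Z T p = -riem g D X Y T Z p := by
  intro p hp
  have hD : IsKoszulDerivative U g D := ⟨hDsmooth, hDK⟩
  have hdiff : ∀ {A : E → E}, ContDiffOn ℝ ∞ A U → DifferentiableAt ℝ A p := fun hA =>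
    (hA.contDiffAt (hU.mem_nhds hp)).differentiableAt (by simp)
  have hschwarz := vAct_vBracket
    (((hg.gFun hZ hT).contDiffAt (hU.mem_nhds hp)).of_le ENat.LEInfty.out) (hdiff hX) (hdiff hY)
  linarith [hD.riem_add_riem_swap hsymm hU hg hX hY hZ hT hp]
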